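/- arXiv:1110.5846 — 2 statements merged into one kernel-verified Lean document; each statement's English description precedes it below -/
import Mathlib

section
/- For all real numbers ε₁, ε₂ with ε₂ > 0 and ε₁ + ε₂ < −1, and all real ξ₁, ξ₂, set u₁ = ξ₁ + iε₁ and u₂ = ξ₂ + iε₂. Then the function (x₁,x₂) ↦ e^{−i(u₁x₁+u₂x₂)} · max(e^{x₁} − e^{x₂} − 1, 0) is Lebesgue integrable on ℝ², and ∬_{ℝ²} e^{−i(u₁x₁+u₂x₂)} max(e^{x₁} − e^{x₂} − 1, 0) dx₁ dx₂ = Γ(i(u₁+u₂) − 1) Γ(−iu₂) / Γ(iu₁ + 1). -/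
/-!
Write `s = -i u₁`, `w = -i u₂`. For fixed `x₂` the `x₁`-integral is the Fourier transform of a
call payoff with strike `c = 1 + e^{x₂}`: splitting `max (e^{x₁} - c) 0` on `x₁ > log c` gives
`c^{s+1} / (s (s+1))`. The remaining `x₂`-integral `∫ e^{w x₂} (1 + e^{x₂})^{s+1} dx₂` becomes
Euler's Beta integral `B(w, -s-1-w)` under the logistic substitution `y = e^{x₂} / (1 + e^{x₂})`,
and `Γ(1 - s) = s (s+1) Γ(-s-1)` turns the result into the stated quotient of Gamma values.
Integrability comes from Tonelli, since the modulus of the integrand is the same integrand with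
`s, w` replaced by their real parts, for which the same computation applies.
-/

open MeasureTheory Set
open scoped Real Complex

section CallPayoff

lemma cexp_mul_max_exp_sub_exp_of_lt (s : ℂ) {a x : ℝ} (hx : a < x) :
    cexp (s * x) * ((max (rexp x - rexp a) 0 : ℝ) : ℂ) =
      cexp ((s + 1) * x) - cexp a * cexp (s * x) := by
  rw [max_eq_left (sub_nonneg.mpr (Real.exp_le_exp.mpr hx.le))]
  push_cast
  rw [add_one_mul, Complex.exp_add]
  ring

lemma support_cexp_mul_max_exp_sub_exp_subset (s : ℂ) (a : ℝ) :
    Function.support (fun x : ℝ => cexp (s * x) * ((max (rexp x - rexp a) 0 : ℝ) : ℂ)) ⊆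
      Ioi a := by
  refine fun x hx => mem_Ioi.mpr (not_le.mp fun hxa => hx ?_)
  simp [sub_nonpos.mpr (Real.exp_le_exp.mpr hxa)]

variable {s : ℂ}

lemma integrable_cexp_mul_max_exp_sub_exp (hs : s.re < -1) (a : ℝ) :
    Integrable (fun x : ℝ => cexp (s * x) * ((max (rexp x - rexp a) 0 : ℝ) : ℂ)) := by
  have hg : IntegrableOn (fun x : ℝ => cexp ((s + 1) * x) - cexp a * cexp (s * x)) (Ioi a) :=
    (integrableOn_exp_mul_complex_Ioi (by simp; linarith) a).sub
      ((integrableOn_exp_mul_complex_Ioi (by linarith) a).const_mul _)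
  refine (integrableOn_iff_integrable_of_support_subset
    (support_cexp_mul_max_exp_sub_exp_subset s a)).mp ?_
  exact hg.congr_fun (fun _ hx => (cexp_mul_max_exp_sub_exp_of_lt s hx).symm) measurableSet_Ioi

lemma integral_cexp_mul_max_exp_sub_exp (hs : s.re < -1) (a : ℝ) :
    ∫ x : ℝ, cexp (s * x) * ((max (rexp x - rexp a) 0 : ℝ) : ℂ) =
      cexp ((s + 1) * a) / (s * (s + 1)) := by
  have hs₀ : s ≠ 0 := by contrapose! hs; simp [hs]
  have hs₁ : s + 1 ≠ 0 := by contrapose! hs; simp [eq_neg_of_add_eq_zero_left hs]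
  calc ∫ x : ℝ, cexp (s * x) * ((max (rexp x - rexp a) 0 : ℝ) : ℂ)
      = ∫ x in Ioi a, cexp (s * x) * ((max (rexp x - rexp a) 0 : ℝ) : ℂ) :=
        (setIntegral_eq_integral_of_forall_compl_eq_zero fun _ hx =>
          Function.notMem_support.mp fun h =>
            hx (support_cexp_mul_max_exp_sub_exp_subset s a h)).symm
    _ = ∫ x in Ioi a, (cexp ((s + 1) * x) - cexp a * cexp (s * x)) :=
        setIntegral_congr_fun measurableSet_Ioi fun _ hx => cexp_mul_max_exp_sub_exp_of_lt s hx
    _ = -cexp ((s + 1) * a) / (s + 1) + cexp a * (cexp (s * a) / s) := by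
        rw [integral_sub (integrableOn_exp_mul_complex_Ioi (by simp; linarith) a)
            ((integrableOn_exp_mul_complex_Ioi (by linarith) a).const_mul _),
          integral_const_mul, integral_exp_mul_complex_Ioi (by simp; linarith),
          integral_exp_mul_complex_Ioi (by linarith)]
        ring
    _ = cexp ((s + 1) * a) / (s * (s + 1)) := by
        rw [add_one_mul (α := ℂ), Complex.exp_add]
        field_simp
        ring

end CallPayoff

namespace Real

lemma log_one_sub_sigmoid (t : ℝ) : log (1 - sigmoid t) = -log (1 + exp t) := by
  rw [← sigmoid_neg, sigmoid_def, neg_neg, log_inv]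

lemma log_sigmoid (t : ℝ) : log (sigmoid t) = t - log (1 + exp t) := by
  have h := congrArg log (sigmoid_mul_rexp_neg t)
  rw [log_mul (sigmoid_pos t).ne' (exp_pos _).ne', log_exp, sigmoid_neg,
    log_one_sub_sigmoid] at h
  linarith

end Real

namespace Complex

lemma ofReal_cpow_of_pos {p : ℝ} (hp : 0 < p) (a : ℂ) :
    (p : ℂ) ^ a = exp (Real.log p * a) := by
  rw [cpow_def_of_ne_zero (by exact_mod_cast hp.ne'), ofReal_log hp.le]

lemma Gamma_one_sub_eq_mul_Gamma_neg_sub_one {s : ℂ} (hs₀ : s ≠ 0) (hs₁ : s + 1 ≠ 0) :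
    Gamma (1 - s) = s * (s + 1) * Gamma (-s - 1) := by
  have h := Gamma_add_one (-s - 1) (by rw [← neg_add']; exact neg_ne_zero.mpr hs₁)
  rw [sub_add_cancel] at h
  rw [show 1 - s = -s + 1 by ring, Gamma_add_one _ (neg_ne_zero.mpr hs₀), h]
  ring

end Complex

section Logistic

open Real

lemma abs_deriv_sigmoid_smul_beta_kernel (w z : ℂ) (t : ℝ) :
    |sigmoid t * (1 - sigmoid t)| •
        ((sigmoid t : ℂ) ^ (w - 1) * (1 - (sigmoid t : ℂ)) ^ (-z - w - 1)) =
      cexp (w * t + z * Real.log (1 + rexp t)) := by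
  have hσ := sigmoid_pos t
  have hσ' : 0 < 1 - sigmoid t := sub_pos.mpr (sigmoid_lt_one t)
  have hprod : sigmoid t * (1 - sigmoid t) =
      rexp (Real.log (sigmoid t) + Real.log (1 - sigmoid t)) := by
    rw [Real.exp_add, Real.exp_log hσ, Real.exp_log hσ']
  rw [abs_of_pos (mul_pos hσ hσ'), hprod, ← Complex.ofReal_one, ← Complex.ofReal_sub,
    Complex.ofReal_cpow_of_pos hσ, Complex.ofReal_cpow_of_pos hσ', Complex.real_smul,
    Complex.ofReal_exp, ← Complex.exp_add, ← Complex.exp_add, log_sigmoid, log_one_sub_sigmoid]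
  push_cast
  congr 1
  ring

lemma integrable_and_integral_cexp_mul_add_mul_log_one_add_exp {w z : ℂ} (hw : 0 < w.re)
    (hwz : (w + z).re < 0) :
    Integrable (fun t : ℝ => cexp (w * t + z * Real.log (1 + rexp t))) ∧
      ∫ t : ℝ, cexp (w * t + z * Real.log (1 + rexp t)) = Complex.betaIntegral w (-z - w) := by
  have hv : 0 < (-z - w).re := by simp at hwz ⊢; linarith
  have hderiv : ∀ t ∈ univ, HasDerivWithinAt sigmoid (sigmoid t * (1 - sigmoid t)) univ t :=
    fun t _ => (hasDerivAt_sigmoid t).hasDerivWithinAt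
  have himage : sigmoid '' univ = Ioo 0 1 := by rw [image_univ, range_sigmoid]
  set g : ℝ → ℂ := fun y => (y : ℂ) ^ (w - 1) * (1 - (y : ℂ)) ^ (-z - w - 1)
  simp_rw [← abs_deriv_sigmoid_smul_beta_kernel w z]
  constructor
  · rw [← integrableOn_univ, ← integrableOn_image_iff_integrableOn_abs_deriv_smul
      MeasurableSet.univ hderiv sigmoid_injective.injOn g, himage]
    exact (Complex.betaIntegral_convergent hw hv).1.mono_set Ioo_subset_Ioc_self
  · rw [← setIntegral_univ, ← integral_image_eq_integral_abs_deriv_smul MeasurableSet.univ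
      hderiv sigmoid_injective.injOn g, himage, Complex.betaIntegral,
      intervalIntegral.integral_of_le zero_le_one, integral_Ioc_eq_integral_Ioo]

end Logistic

section Spread

noncomputable def spreadIntegrand (s w : ℂ) (x : ℝ × ℝ) : ℂ :=
  cexp (s * x.1 + w * x.2) * ((max (rexp x.1 - rexp x.2 - 1) 0 : ℝ) : ℂ)

lemma continuous_spreadIntegrand (s w : ℂ) : Continuous (spreadIntegrand s w) := by
  unfold spreadIntegrand
  fun_prop

lemma spreadIntegrand_mk_eq_mul_call (s w : ℂ) (x₁ x₂ : ℝ) :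
    spreadIntegrand s w (x₁, x₂) = cexp (w * x₂) *
      (cexp (s * x₁) * ((max (rexp x₁ - rexp (Real.log (1 + rexp x₂))) 0 : ℝ) : ℂ)) := by
  rw [spreadIntegrand, Real.exp_log (by positivity), Complex.exp_add, sub_sub, add_comm 1]
  ring

lemma norm_spreadIntegrand (s w : ℂ) (x : ℝ × ℝ) :
    ‖spreadIntegrand s w x‖ = (spreadIntegrand s.re w.re x).re := by
  rw [spreadIntegrand, spreadIntegrand, norm_mul, Complex.norm_exp, Complex.norm_real,
    Real.norm_of_nonneg (le_max_right _ _), Complex.re_mul_ofReal]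
  norm_cast
  simp

variable {s w : ℂ}

lemma integrable_spreadIntegrand_slice (hs : s.re < -1) (x₂ : ℝ) :
    Integrable (fun x₁ => spreadIntegrand s w (x₁, x₂)) := by
  simp_rw [spreadIntegrand_mk_eq_mul_call]
  exact (integrable_cexp_mul_max_exp_sub_exp hs _).const_mul _

lemma integral_spreadIntegrand_slice (hs : s.re < -1) (x₂ : ℝ) :
    ∫ x₁, spreadIntegrand s w (x₁, x₂) =
      cexp (w * x₂ + (s + 1) * Real.log (1 + rexp x₂)) / (s * (s + 1)) := by
  simp_rw [spreadIntegrand_mk_eq_mul_call]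
  rw [integral_const_mul, integral_cexp_mul_max_exp_sub_exp hs, Complex.exp_add, mul_div_assoc]

lemma integrable_spreadIntegrand (hw : 0 < w.re) (hsw : (s + w).re < -1) :
    Integrable (spreadIntegrand s w) := by
  have hs : s.re < -1 := by simp at hsw; linarith
  have hs' : (s.re : ℂ).re < -1 := by simpa using hs
  refine (integrable_prod_iff' (continuous_spreadIntegrand s w).aestronglyMeasurable).mpr
    ⟨ae_of_all _ (integrable_spreadIntegrand_slice hs), ?_⟩
  have hslice : ∀ x₂ : ℝ, ∫ x₁, ‖spreadIntegrand s w (x₁, x₂)‖ =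
      (cexp (w.re * x₂ + (s.re + 1) * Real.log (1 + rexp x₂)) / (s.re * (s.re + 1))).re := by
    intro x₂
    simp_rw [norm_spreadIntegrand]
    rw [← integral_spreadIntegrand_slice hs']
    exact integral_re (integrable_spreadIntegrand_slice hs' x₂)
  simp_rw [hslice]
  exact ((integrable_and_integral_cexp_mul_add_mul_log_one_add_exp (w := w.re) (z := s.re + 1)
    (by simpa) (by simp at hsw ⊢; linarith)).1.div_const _).re

lemma integral_spreadIntegrand (hw : 0 < w.re) (hsw : (s + w).re < -1) :
    ∫ x, spreadIntegrand s w x =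
      Complex.Gamma (-s - w - 1) * Complex.Gamma w / Complex.Gamma (1 - s) := by
  have hs : s.re < -1 := by simp at hsw; linarith
  have hs₀ : s ≠ 0 := by contrapose! hs; simp [hs]
  have hs₁ : s + 1 ≠ 0 := by contrapose! hs; simp [eq_neg_of_add_eq_zero_left hs]
  have hwz : (w + (s + 1)).re < 0 := by simp at hsw ⊢; linarith
  have hv : 0 < (-(s + 1) - w).re := by simp at hsw ⊢; linarith
  have hΓ : Complex.Gamma (-s - 1) ≠ 0 := Complex.Gamma_ne_zero_of_re_pos (by simp; linarith)
  rw [Measure.volume_eq_prod, integral_prod_symm _ (integrable_spreadIntegrand hw hsw)]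
  simp_rw [integral_spreadIntegrand_slice hs]
  rw [integral_div, (integrable_and_integral_cexp_mul_add_mul_log_one_add_exp hw hwz).2,
    Complex.betaIntegral_eq_Gamma_mul_div _ _ hw hv, show w + (-(s + 1) - w) = -s - 1 by ring,
    show -(s + 1) - w = -s - w - 1 by ring, Complex.Gamma_one_sub_eq_mul_Gamma_neg_sub_one hs₀ hs₁]
  field_simp

end Spread

/-- **Fourier transform of the spread option payoff.**
For ε₂ > 0 and ε₁ + ε₂ < −1, with u₁ = ξ₁ + iε₁, u₂ = ξ₂ + iε₂, the function
(x₁,x₂) ↦ e^{−i(u₁x₁+u₂x₂)} max(e^{x₁} − e^{x₂} − 1, 0) is integrable on ℝ² and its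
integral equals Γ(i(u₁+u₂) − 1) Γ(−iu₂) / Γ(iu₁ + 1). -/
theorem stmt_0 (ε₁ ε₂ : ℝ) (hε₂ : 0 < ε₂) (hε : ε₁ + ε₂ < -1) (ξ₁ ξ₂ : ℝ) :
    Integrable (fun x : ℝ × ℝ =>
      Complex.exp (-Complex.I * (((ξ₁ : ℂ) + Complex.I * (ε₁ : ℂ)) * (x.1 : ℂ) +
          ((ξ₂ : ℂ) + Complex.I * (ε₂ : ℂ)) * (x.2 : ℂ))) *
        ((max (Real.exp x.1 - Real.exp x.2 - 1) 0 : ℝ) : ℂ)) ∧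
    (∫ x : ℝ × ℝ,
      Complex.exp (-Complex.I * (((ξ₁ : ℂ) + Complex.I * (ε₁ : ℂ)) * (x.1 : ℂ) +
          ((ξ₂ : ℂ) + Complex.I * (ε₂ : ℂ)) * (x.2 : ℂ))) *
        ((max (Real.exp x.1 - Real.exp x.2 - 1) 0 : ℝ) : ℂ)) =
      Complex.Gamma (Complex.I * (((ξ₁ : ℂ) + Complex.I * (ε₁ : ℂ)) +
          ((ξ₂ : ℂ) + Complex.I * (ε₂ : ℂ))) - 1) *
        Complex.Gamma (-Complex.I * ((ξ₂ : ℂ) + Complex.I * (ε₂ : ℂ))) /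
        Complex.Gamma (Complex.I * ((ξ₁ : ℂ) + Complex.I * (ε₁ : ℂ)) + 1) := by
  set u₁ : ℂ := ξ₁ + Complex.I * ε₁
  set u₂ : ℂ := ξ₂ + Complex.I * ε₂
  have hintegrand : (fun x : ℝ × ℝ => cexp (-Complex.I * (u₁ * x.1 + u₂ * x.2)) *
      ((max (rexp x.1 - rexp x.2 - 1) 0 : ℝ) : ℂ)) =
      spreadIntegrand (-Complex.I * u₁) (-Complex.I * u₂) := by
    ext x
    rw [spreadIntegrand, mul_add, mul_assoc, mul_assoc]
  have hw : 0 < (-Complex.I * u₂).re := by simpa [u₂] using hε₂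
  have hsw : (-Complex.I * u₁ + -Complex.I * u₂).re < -1 := by simpa [u₁, u₂] using hε
  rw [hintegrand, integral_spreadIntegrand hw hsw]
  refine ⟨integrable_spreadIntegrand hw hsw, ?_⟩
  congr 3 <;> ring
end

section
/- For all real a > 0 and u ≥ 0, the function z ↦ (1 − e^{−uz}) e^{−z/a} / z is Lebesgue integrable on (0, ∞) and ∫₀^∞ (1 − e^{−uz}) e^{−z/a} z^{−1} dz = log(1 + au). -/
/-! Rewriting `(1 - e^{-uz}) e^{-z/a}` as `e^{-z/a} - e^{-(1/a + u) z}` turns the integral into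
a Frullani integral for `f x = e^{-x}`, with `f (0⁺) = 1` and `f (∞) = 0`; integrability comes
from `1 - e^{-t} ≤ t`, which bounds the integrand by `u e^{-z/a}`. -/

open MeasureTheory Set Real

lemma exp_neg_mul_sub_exp_neg_mul_le (p q x : ℝ) :
    exp (-(p * x)) - exp (-(q * x)) ≤ (q - p) * x * exp (-(p * x)) := by
  have h := add_one_le_exp (-((q - p) * x))
  have hsplit : exp (-(q * x)) = exp (-(p * x)) * exp (-((q - p) * x)) := by
    rw [← exp_add]; ring_nf
  rw [hsplit]
  nlinarith [exp_pos (-(p * x))]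

lemma integrableOn_inv_mul_exp_neg_sub_exp_neg {p q : ℝ} (hp : 0 < p) (hq : 0 < q) :
    IntegrableOn (fun x => x⁻¹ * (exp (-(p * x)) - exp (-(q * x)))) (Ioi 0) := by
  wlog hpq : p ≤ q generalizing p q
  · exact (this hq hp (le_of_not_ge hpq)).neg.congr_fun
      (fun x _ => by simp only [Pi.neg_apply]; ring) measurableSet_Ioi
  refine Integrable.mono' ((exp_neg_integrableOn_Ioi 0 hp).const_mul (q - p))
    (by fun_prop) ?_
  filter_upwards [ae_restrict_mem measurableSet_Ioi] with x (hx : 0 < x)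
  have hdiff : 0 ≤ exp (-(p * x)) - exp (-(q * x)) := by
    have : -(q * x) ≤ -(p * x) := by nlinarith
    linarith [exp_le_exp.mpr this]
  rw [norm_of_nonneg (by positivity), inv_mul_le_iff₀ hx]
  calc exp (-(p * x)) - exp (-(q * x)) ≤ (q - p) * x * exp (-(p * x)) :=
        exp_neg_mul_sub_exp_neg_mul_le p q x
    _ = x * ((q - p) * exp (-p * x)) := by ring_nf

lemma integral_inv_mul_exp_neg_sub_exp_neg {p q : ℝ} (hp : 0 < p) (hq : 0 < q) :
    ∫ x in Ioi 0, x⁻¹ * (exp (-(p * x)) - exp (-(q * x))) = log (q / p) := by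
  have hcont : Continuous fun x : ℝ => exp (-x) := by fun_prop
  have h := Frullani.integral_Ioi_eq (f := fun x => exp (-x)) (L := 1) (R := 0)
    (hcont.locallyIntegrable.locallyIntegrableOn _) hp hq
    (by simpa using (hcont.tendsto 0).mono_left nhdsWithin_le_nhds)
    tendsto_exp_neg_atTop_nhds_zero
    (integrableOn_inv_mul_exp_neg_sub_exp_neg hp hq)
  simpa using h

/-- **Frullani-type integral for the gamma subordinator's Laplace exponent.**
For a > 0 and u ≥ 0, z ↦ (1 − e^{−uz}) e^{−z/a} / z is integrable on (0,∞) and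
∫₀^∞ (1 − e^{−uz}) e^{−z/a} z⁻¹ dz = log(1 + au). -/
theorem stmt_9 (a u : ℝ) (ha : 0 < a) (hu : 0 ≤ u) :
    IntegrableOn (fun z : ℝ => (1 - Real.exp (-u * z)) * Real.exp (-z / a) / z)
      (Set.Ioi 0) ∧
    ∫ z in Set.Ioi (0 : ℝ), (1 - Real.exp (-u * z)) * Real.exp (-z / a) / z =
      Real.log (1 + a * u) := by
  have hp : 0 < a⁻¹ := inv_pos.mpr ha
  have hq : 0 < a⁻¹ + u := by positivity
  have hfun : (fun z : ℝ => (1 - exp (-u * z)) * exp (-z / a) / z) =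
      fun z => z⁻¹ * (exp (-(a⁻¹ * z)) - exp (-((a⁻¹ + u) * z))) := by
    ext z
    rw [show -((a⁻¹ + u) * z) = -(a⁻¹ * z) + -u * z by ring, exp_add,
      show -z / a = -(a⁻¹ * z) by ring]
    ring
  have hlog : (a⁻¹ + u) / a⁻¹ = 1 + a * u := by field_simp
  rw [hfun, ← hlog]
  exact ⟨integrableOn_inv_mul_exp_neg_sub_exp_neg hp hq,
    integral_inv_mul_exp_neg_sub_exp_neg hp hq⟩
end
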